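/- arXiv:2506.17219 — 4 statements merged into one kernel-verified Lean document; each statement's English description precedes it below -/
import Mathlib

section
/- For a discrete probability distribution π over a finite set Y with full support, the covariance between π(y) and log π(y) equals zero if and only if π is the uniform distribution on Y. -/
open Finset

/-- Lagrange-type identity behind Chebyshev's sum inequality. -/
theorem two_mul_weighted_cov_eq_sum_sum {ι R : Type*} [Fintype ι] [CommRing R] (w f g : ι → R)
    (hw : ∑ i, w i = 1) :
    2 * (∑ i, w i * (f i * g i) - (∑ i, w i * f i) * ∑ i, w i * g i) =
      ∑ i, ∑ j, w i * w j * ((f i - f j) * (g i - g j)) := by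
  have expand : ∀ i j, w i * w j * ((f i - f j) * (g i - g j)) =
      w j * (w i * (f i * g i)) + w i * (w j * (f j * g j))
        - (w i * f i) * (w j * g j) - (w j * f j) * (w i * g i) := by
    intro i j; ring
  simp only [expand, sum_sub_distrib, sum_add_distrib, ← mul_sum, ← sum_mul, hw]
  ring

theorem StrictMonoOn.sub_mul_sub_pos {S : Set ℝ} {φ : ℝ → ℝ} (hφ : StrictMonoOn φ S)
    {a b : ℝ} (ha : a ∈ S) (hb : b ∈ S) (hab : a ≠ b) : 0 < (a - b) * (φ a - φ b) := by
  rcases hab.lt_or_gt with h | h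
  · exact mul_pos_of_neg_of_neg (sub_neg.2 h) (sub_neg.2 (hφ ha hb h))
  · exact mul_pos (sub_pos.2 h) (sub_pos.2 (hφ hb ha h))

theorem weighted_cov_comp_eq_zero_iff {ι : Type*} [Fintype ι] {S : Set ℝ} {φ : ℝ → ℝ}
    (hφ : StrictMonoOn φ S) (w f : ι → ℝ) (hw_pos : ∀ i, 0 < w i) (hw : ∑ i, w i = 1)
    (hf : ∀ i, f i ∈ S) :
    ∑ i, w i * (f i * φ (f i)) - (∑ i, w i * f i) * ∑ i, w i * φ (f i) = 0 ↔
      ∀ i j, f i = f j := by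
  set term : ι × ι → ℝ := fun p ↦
    w p.1 * w p.2 * ((f p.1 - f p.2) * (φ (f p.1) - φ (f p.2)))
  have term_pos : ∀ p, f p.1 ≠ f p.2 → 0 < term p := fun p hne ↦
    mul_pos (mul_pos (hw_pos _) (hw_pos _)) (hφ.sub_mul_sub_pos (hf _) (hf _) hne)
  have term_nonneg : 0 ≤ term := fun p ↦ by
    by_cases h : f p.1 = f p.2
    · simp [term, h]
    · exact (term_pos p h).le
  have identity := two_mul_weighted_cov_eq_sum_sum w f (φ ∘ f) hw
  rw [← Fintype.sum_prod_type'] at identity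
  change 2 * _ = ∑ p, term p at identity
  constructor
  · intro hcov i j
    have hterm : term = 0 := by
      rw [← Fintype.sum_eq_zero_iff_of_nonneg term_nonneg, ← identity]
      simp [hcov]
    by_contra hne
    exact (term_pos (i, j) hne).ne' (congrFun hterm (i, j))
  · intro hconst
    have hsum : ∑ p, term p = 0 := Fintype.sum_eq_zero _ fun p ↦ by simp [term, hconst p.1 p.2]
    simpa [hsum] using identity

theorem forall_eq_iff_forall_eq_inv_card {Y : Type*} [Fintype Y] (π : Y → ℝ)
    (hsum : ∑ y, π y = 1) : (∀ y z, π y = π z) ↔ ∀ y, π y = 1 / (Fintype.card Y : ℝ) := by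
  constructor
  · intro hconst y
    have hcard : (Fintype.card Y : ℝ) * π y = 1 := by
      rw [← hsum, ← nsmul_eq_mul, ← Finset.card_univ, ← sum_const]
      exact sum_congr rfl fun z _ ↦ hconst y z
    rw [eq_div_iff_mul_eq (left_ne_zero_of_mul_eq_one hcard), mul_comm, hcard]
  · intro huniform y z
    rw [huniform y, huniform z]

theorem stmt1_general {Y : Type*} [Fintype Y] (π : Y → ℝ)
    (hpos : ∀ y, 0 < π y) (hsum : ∑ y, π y = 1) :
    ((∑ y, π y * (π y * Real.log (π y))) -
      (∑ y, π y * π y) * (∑ y, π y * Real.log (π y)) = 0)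
      ↔ ∀ y, π y = 1 / (Fintype.card Y : ℝ) :=
  (weighted_cov_comp_eq_zero_iff Real.strictMonoOn_log π π hpos hsum hpos).trans
    (forall_eq_iff_forall_eq_inv_card π hsum)

/-- The covariance between `π(y)` and `log π(y)` vanishes iff `π` is uniform. -/
theorem stmt1 {Y : Type*} [Fintype Y] [Nonempty Y] (π : Y → ℝ)
    (hpos : ∀ y, 0 < π y) (hsum : ∑ y, π y = 1) :
    ((∑ y, π y * (π y * Real.log (π y))) -
      (∑ y, π y * π y) * (∑ y, π y * Real.log (π y)) = 0)
      ↔ ∀ y, π y = 1 / (Fintype.card Y : ℝ) :=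
  stmt1_general π hpos hsum
end

section
/- Let π be a probability distribution with full support on a finite set A and for η ≥ 0 define π_η(a) = π(a)^{1+η} / ∑_{a'} π(a')^{1+η}. Then the Shannon entropy H(π_η) is non-increasing in η; in particular H(π_η) ≤ H(π) for all η ≥ 0. -/
/-!
Write `q ∝ p ^ t` for the escort distribution of `p` at `t ≥ 1` and `Z = ∑ p ^ t`, so that
`log q = t log p - log Z`. Gibbs' inequality applied to the pair `(q, p)` gives
`log Z ≤ (t - 1) E_q[log p]`, and applied to `(p, q)` gives `(t - 1) E_p[log p] ≤ log Z`; hence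
`E_p[log p] ≤ E_q[log p]` and `-H(q) = t E_q[log p] - log Z ≥ E_q[log p] ≥ E_p[log p] = -H(p)`.
Monotonicity in `η` follows because escorts compose: `escort (escort p s) t = escort p (s * t)`.
-/

noncomputable section

open Real Finset

variable {A : Type*} [Fintype A]

def shannonEntropy (p : A → ℝ) : ℝ := -∑ a, p a * log (p a)

def escort (p : A → ℝ) (t : ℝ) (a : A) : ℝ := p a ^ t / ∑ a', p a' ^ t

theorem sum_mul_log_le_sum_mul_log {p q : A → ℝ} (hp : ∀ a, 0 < p a) (hq : ∀ a, 0 < q a)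
    (hpq : ∑ a, q a ≤ ∑ a, p a) :
    ∑ a, p a * log (q a) ≤ ∑ a, p a * log (p a) := by
  have hterm : ∀ a ∈ univ, p a * log (q a) - p a * log (p a) ≤ q a - p a := by
    intro a _
    have hlog := log_le_sub_one_of_pos (div_pos (hq a) (hp a))
    rw [log_div (hq a).ne' (hp a).ne', div_sub_one (hp a).ne',
      le_div_iff₀ (hp a)] at hlog
    linarith
  have := sum_le_sum hterm
  simp only [sum_sub_distrib] at this
  linarith

theorem escort_one {p : A → ℝ} (hs : ∑ a, p a = 1) : escort p 1 = p := by
  ext a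
  simp [escort, hs]

section Escort

variable [Nonempty A] {p : A → ℝ}

theorem sum_rpow_pos (hp : ∀ a, 0 < p a) (t : ℝ) : 0 < ∑ a, p a ^ t :=
  sum_pos (fun a _ => rpow_pos_of_pos (hp a) t) univ_nonempty

theorem escort_pos (hp : ∀ a, 0 < p a) (t : ℝ) (a : A) : 0 < escort p t a :=
  div_pos (rpow_pos_of_pos (hp a) t) (sum_rpow_pos hp t)

theorem sum_escort (hp : ∀ a, 0 < p a) (t : ℝ) : ∑ a, escort p t a = 1 := by
  simp only [escort]
  rw [← sum_div, div_self (sum_rpow_pos hp t).ne']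

theorem escort_escort (hp : ∀ a, 0 < p a) (s t : ℝ) :
    escort (escort p s) t = escort p (s * t) := by
  have hpow : ∀ a, escort p s a ^ t = p a ^ (s * t) / (∑ a', p a' ^ s) ^ t := fun a => by
    rw [escort, div_rpow (rpow_pos_of_pos (hp a) s).le (sum_rpow_pos hp s).le,
      ← rpow_mul (hp a).le]
  ext a
  have := (rpow_pos_of_pos (sum_rpow_pos hp s) t).ne'
  have := (sum_rpow_pos hp (s * t)).ne'
  rw [escort, hpow]
  simp_rw [hpow]
  rw [← sum_div, escort]
  field_simp

theorem log_escort (hp : ∀ a, 0 < p a) (t : ℝ) (a : A) :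
    log (escort p t a) = t * log (p a) - log (∑ a', p a' ^ t) := by
  rw [escort, log_div (rpow_pos_of_pos (hp a) t).ne' (sum_rpow_pos hp t).ne', log_rpow (hp a)]

theorem sum_mul_log_escort (hp : ∀ a, 0 < p a) (t : ℝ) {w : A → ℝ} (hw : ∑ a, w a = 1) :
    ∑ a, w a * log (escort p t a) = t * ∑ a, w a * log (p a) - log (∑ a, p a ^ t) := by
  calc ∑ a, w a * log (escort p t a)
      = ∑ a, (t * (w a * log (p a)) - w a * log (∑ a', p a' ^ t)) :=
        sum_congr rfl fun a _ => by rw [log_escort hp]; ring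
    _ = t * ∑ a, w a * log (p a) - log (∑ a, p a ^ t) := by
        rw [sum_sub_distrib, ← mul_sum, ← sum_mul, hw, one_mul]

theorem shannonEntropy_escort_le (hp : ∀ a, 0 < p a) (hs : ∑ a, p a = 1) {t : ℝ} (ht : 1 ≤ t) :
    shannonEntropy (escort p t) ≤ shannonEntropy p := by
  rcases ht.eq_or_lt with rfl | ht
  · rw [escort_one hs]
  set q := escort p t
  set E := ∑ a, q a * log (p a)
  set P := ∑ a, p a * log (p a)
  have hq := sum_escort hp t
  have hlogZ_le : log (∑ a, p a ^ t) ≤ (t - 1) * E := by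
    have := sum_mul_log_le_sum_mul_log (escort_pos hp t) hp (hs.trans hq.symm).le
    rw [sum_mul_log_escort hp t hq] at this
    linarith
  have hle_logZ : (t - 1) * P ≤ log (∑ a, p a ^ t) := by
    have := sum_mul_log_le_sum_mul_log hp (escort_pos hp t) (hq.trans hs.symm).le
    rw [sum_mul_log_escort hp t hs] at this
    linarith
  have hPE : P ≤ E := le_of_mul_le_mul_left (hle_logZ.trans hlogZ_le) (by linarith)
  rw [shannonEntropy, shannonEntropy, sum_mul_log_escort hp t hq]
  linarith

theorem antitoneOn_shannonEntropy_escort (hp : ∀ a, 0 < p a) :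
    AntitoneOn (fun t => shannonEntropy (escort p t)) (Set.Ioi 0) := by
  intro s (hs : 0 < s) t _ hst
  have hcomp : escort p t = escort (escort p s) (t / s) := by
    rw [escort_escort hp, mul_div_cancel₀ t hs.ne']
  simp only [hcomp]
  exact shannonEntropy_escort_le (escort_pos hp s) (sum_escort hp s) ((one_le_div hs).mpr hst)

end Escort

end

/-- For `π_η(a) = π(a)^{1+η} / ∑ π(a')^{1+η}`, the Shannon entropy `H(π_η)` is
non-increasing in `η ≥ 0`; in particular `H(π_η) ≤ H(π)` for all `η ≥ 0`. -/
theorem stmt10 {A : Type*} [Fintype A] [Nonempty A] (π : A → ℝ)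
    (hpos : ∀ a, 0 < π a) (hsum : ∑ a, π a = 1)
    (πη : ℝ → A → ℝ)
    (hπη : ∀ η a, πη η a = π a ^ (1 + η) / ∑ a', π a' ^ (1 + η)) :
    AntitoneOn (fun η => -∑ a, πη η a * Real.log (πη η a)) (Set.Ici 0) ∧
    ∀ η : ℝ, 0 ≤ η →
      (-∑ a, πη η a * Real.log (πη η a)) ≤ -∑ a, π a * Real.log (π a) := by
  have hfamily : πη = fun η => escort π (1 + η) := funext fun η => funext (hπη η)
  subst hfamily
  have hanti : AntitoneOn (fun η => shannonEntropy (escort π (1 + η))) (Set.Ici 0) :=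
    (antitoneOn_shannonEntropy_escort hpos).comp_MonotoneOn (monotoneOn_const.add monotoneOn_id)
      fun η (hη : 0 ≤ η) => show (0 : ℝ) < 1 + η by linarith
  refine ⟨hanti, fun η hη => ?_⟩
  have hle := hanti (Set.mem_Ici.2 le_rfl) hη hη
  simp only [add_zero, escort_one hsum] at hle
  exact hle
end

section
/- The derivative at η = 0 of the entropy of the exponentially tilted distribution π_η(a) ∝ π(a)·exp(η·r(a)) equals −Cov_{a~π}(log π(a), r(a)). -/
/-!
Write `π_η = N_η / Z_η` with `N_η(a) = π(a) e^{η r(a)}`. Differentiating the quotient gives the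
score identity `∂_η π_η(a) = π_η(a) (r(a) − E_{π_η} r)`, and differentiating `−x log x` gives the
chain rule factor `−log π_η(a) − 1`. At `η = 0` the constant `−1` pairs with
`∑ π(a) (r(a) − E_π r) = 0`, and what remains is `−∑ π(a) log π(a) (r(a) − E_π r) = −Cov_π(log π, r)`.
-/

open Finset

noncomputable section

namespace ExponentialTilt

open Real

variable {A : Type*} [Fintype A]

def tilt (w r : A → ℝ) (η : ℝ) (a : A) : ℝ :=
  w a * exp (η * r a) / ∑ b, w b * exp (η * r b)

lemma tilt_zero {w : A → ℝ} (hsum : ∑ a, w a = 1) (r : A → ℝ) : tilt w r 0 = w := by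
  funext a
  simp [tilt, hsum]

lemma hasDerivAt_tilt (w r : A → ℝ) {η : ℝ} (hZ : ∑ b, w b * exp (η * r b) ≠ 0) (a : A) :
    HasDerivAt (fun η => tilt w r η a) (tilt w r η a * (r a - ∑ b, tilt w r η b * r b)) η := by
  have hexp : ∀ b, HasDerivAt (fun η => w b * exp (η * r b)) (w b * (exp (η * r b) * r b)) η :=
    fun b => ((hasDerivAt_mul_const (r b)).exp).const_mul (w b)
  have hZ' := HasDerivAt.fun_sum (u := univ) fun b _ => hexp b
  have hmean : ∑ b, tilt w r η b * r b
      = (∑ b, w b * (exp (η * r b) * r b)) / ∑ b, w b * exp (η * r b) := by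
    rw [sum_div]
    exact sum_congr rfl fun b _ => by simp only [tilt]; ring
  refine ((hexp a).fun_div hZ' hZ).congr_deriv ?_
  rw [hmean, tilt]
  field_simp

lemma hasDerivAt_sum_negMulLog {p : ℝ → A → ℝ} {p' : A → ℝ} {η : ℝ}
    (hp : ∀ a, HasDerivAt (fun η => p η a) (p' a) η) (hne : ∀ a, p η a ≠ 0) :
    HasDerivAt (fun η => ∑ a, negMulLog (p η a)) (∑ a, (-log (p η a) - 1) * p' a) η :=
  HasDerivAt.fun_sum fun a _ => (hasDerivAt_negMulLog (hne a)).comp η (hp a) (h₂ := negMulLog)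

lemma sum_mul_mul_sub_mean (w f g : A → ℝ) :
    ∑ a, w a * f a * (g a - ∑ b, w b * g b)
      = ∑ a, w a * (f a * g a) - (∑ a, w a * f a) * ∑ a, w a * g a := by
  simp only [mul_sub, sum_sub_distrib, sum_mul, mul_assoc]

end ExponentialTilt

end

open ExponentialTilt in
theorem stmt11_general {A : Type*} [Fintype A] (π : A → ℝ)
    (hpos : ∀ a, 0 < π a) (hsum : ∑ a, π a = 1) (r : A → ℝ)
    (πη : ℝ → A → ℝ)
    (hπη : ∀ η a, πη η a = π a * Real.exp (η * r a) / ∑ a', π a' * Real.exp (η * r a')) :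
    HasDerivAt (fun η => -∑ a, πη η a * Real.log (πη η a))
      (-((∑ a, π a * (Real.log (π a) * r a)) -
         (∑ a, π a * Real.log (π a)) * (∑ a, π a * r a))) 0 := by
  have htilt : πη = tilt π r := funext fun η => funext (hπη η)
  have hentropy : (fun η => -∑ a, πη η a * Real.log (πη η a))
      = fun η => ∑ a, Real.negMulLog (tilt π r η a) := by
    simp only [htilt, Real.negMulLog, ← sum_neg_distrib, neg_mul]
  have hZ : ∑ b, π b * Real.exp (0 * r b) ≠ 0 := by simp [hsum]
  have hderiv := hasDerivAt_sum_negMulLog (hasDerivAt_tilt π r hZ) fun a => by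
    rw [tilt_zero hsum]; exact (hpos a).ne'
  rw [hentropy]
  convert hderiv using 1
  simp only [tilt_zero hsum]
  have hcentered : ∑ a, π a * (r a - ∑ b, π b * r b) = 0 := by
    simp only [mul_sub, sum_sub_distrib, ← sum_mul, hsum, one_mul, sub_self]
  have hsplit : ∑ a, (-Real.log (π a) - 1) * (π a * (r a - ∑ b, π b * r b))
      = -∑ a, π a * Real.log (π a) * (r a - ∑ b, π b * r b)
        - ∑ a, π a * (r a - ∑ b, π b * r b) := by
    rw [← sum_neg_distrib, ← sum_sub_distrib]
    exact sum_congr rfl fun a _ => by ring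
  rw [hsplit, hcentered, sub_zero, sum_mul_mul_sub_mean]

/-- The derivative at `η = 0` of the entropy of the tilted distribution
`π_η(a) ∝ π(a) exp(η r(a))` equals `−Cov_{a∼π}(log π(a), r(a))`. -/
theorem stmt11 {A : Type*} [Fintype A] [Nonempty A] (π : A → ℝ)
    (hpos : ∀ a, 0 < π a) (hsum : ∑ a, π a = 1) (r : A → ℝ)
    (πη : ℝ → A → ℝ)
    (hπη : ∀ η a, πη η a = π a * Real.exp (η * r a) / ∑ a', π a' * Real.exp (η * r a')) :
    HasDerivAt (fun η => -∑ a, πη η a * Real.log (πη η a))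
      (-((∑ a, π a * (Real.log (π a) * r a)) -
         (∑ a, π a * Real.log (π a)) * (∑ a, π a * r a))) 0 :=
  stmt11_general π hpos hsum r πη hπη
end

section
/- If the reward is r(a) = log π(a) (trajectory-entropy reward), then the first-order change in entropy under the tilted update π_η(a) ∝ π(a)e^{η r(a)} is −Var_{a~π}(log π(a)) ≤ 0, so entropy decreases to first order unless π is uniform on its support. -/
/-!
Since `π ^ (1 + η) = π * exp (η * log π)`, the family `πη` is the exponential tilt of `π` by
the reward `r = log π`. At `η = 0` each coordinate of a tilt moves with velocity
`π a * (r a - E_π r)`, so the entropy `∑ negMulLog` moves with velocity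
`-∑ (log π a + 1) π a (r a - E_π r) = -Cov_π(log π, r)`. For `r = log π` this is minus the
variance `∑ π a (log π a - E_π log π)²`, which vanishes iff `log π` is constant, i.e. iff `π` is
uniform.
-/

open Finset
open Real (exp log negMulLog hasDerivAt_negMulLog)

lemma rpow_one_add_eq_mul_exp {x : ℝ} (hx : 0 < x) (η : ℝ) :
    x ^ (1 + η) = x * exp (η * log x) := by
  rw [Real.rpow_add hx, Real.rpow_one, Real.rpow_def_of_pos hx, mul_comm (log x)]

lemma hasDerivAt_mul_exp_mul (c x : ℝ) :
    HasDerivAt (fun η => c * exp (η * x)) (c * x) 0 := by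
  simpa using ((hasDerivAt_mul_const x).exp.const_mul c : HasDerivAt _ _ (0 : ℝ))

section Tilt

variable {A : Type*} [Fintype A]

noncomputable def tilt (p r : A → ℝ) (η : ℝ) (a : A) : ℝ :=
  p a * exp (η * r a) / ∑ b, p b * exp (η * r b)

lemma tilt_zero {p : A → ℝ} (hsum : ∑ a, p a = 1) (r : A → ℝ) : tilt p r 0 = p := by
  funext a
  simp [tilt, hsum]

lemma hasDerivAt_tilt_zero {p : A → ℝ} (hsum : ∑ a, p a = 1) (r : A → ℝ) (a : A) :
    HasDerivAt (fun η => tilt p r η a) (p a * (r a - ∑ b, p b * r b)) 0 := by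
  have hZ : HasDerivAt (fun η => ∑ b, p b * exp (η * r b)) (∑ b, p b * r b) 0 :=
    HasDerivAt.fun_sum fun b _ => hasDerivAt_mul_exp_mul (p b) (r b)
  refine ((hasDerivAt_mul_exp_mul (p a) (r a)).div hZ (by simp [hsum])).congr_deriv ?_
  simp only [zero_mul, Real.exp_zero, mul_one, hsum]
  ring

lemma hasDerivAt_entropy_tilt_zero {p : A → ℝ} (hpos : ∀ a, 0 < p a) (hsum : ∑ a, p a = 1)
    (r : A → ℝ) :
    HasDerivAt (fun η => ∑ a, negMulLog (tilt p r η a))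
      (-(∑ a, p a * log (p a) * r a - (∑ a, p a * log (p a)) * ∑ a, p a * r a)) 0 := by
  have h := HasDerivAt.fun_sum (u := univ) fun a _ =>
    (hasDerivAt_negMulLog (x := tilt p r 0 a) (by rw [tilt_zero hsum]; exact (hpos a).ne')).comp
      (0 : ℝ) (hasDerivAt_tilt_zero hsum r a)
  refine h.congr_deriv ?_
  simp only [tilt_zero hsum]
  simp only [mul_sub, sub_mul, sum_sub_distrib, neg_mul, one_mul, ← sum_mul, hsum,
    sum_neg_distrib, ← mul_assoc, mul_comm (log _)]
  ring

lemma sum_mul_sq_sub_sq_eq {p : A → ℝ} (hsum : ∑ a, p a = 1) (f : A → ℝ) :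
    ∑ a, p a * f a ^ 2 - (∑ a, p a * f a) ^ 2 = ∑ a, p a * (f a - ∑ b, p b * f b) ^ 2 := by
  set m := ∑ b, p b * f b
  have expand (a : A) :
      p a * (f a - m) ^ 2 = p a * f a ^ 2 - 2 * m * (p a * f a) + m ^ 2 * p a := by
    ring
  simp only [expand, sum_add_distrib, sum_sub_distrib, ← mul_sum, hsum]
  ring

lemma sum_mul_sq_sub_sq_nonneg {p : A → ℝ} (hp : ∀ a, 0 ≤ p a) (hsum : ∑ a, p a = 1)
    (f : A → ℝ) : 0 ≤ ∑ a, p a * f a ^ 2 - (∑ a, p a * f a) ^ 2 := by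
  rw [sum_mul_sq_sub_sq_eq hsum]
  exact sum_nonneg fun a _ => mul_nonneg (hp a) (sq_nonneg _)

lemma sum_mul_sq_sub_sq_eq_zero_iff {p : A → ℝ} (hpos : ∀ a, 0 < p a) (hsum : ∑ a, p a = 1)
    (f : A → ℝ) :
    ∑ a, p a * f a ^ 2 - (∑ a, p a * f a) ^ 2 = 0 ↔ ∀ a, f a = ∑ b, p b * f b := by
  rw [sum_mul_sq_sub_sq_eq hsum,
    sum_eq_zero_iff_of_nonneg fun a _ => mul_nonneg (hpos a).le (sq_nonneg _)]
  simp [(hpos _).ne', sub_eq_zero]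

lemma forall_eq_sum_mul_iff {p : A → ℝ} (hsum : ∑ a, p a = 1) (f : A → ℝ) :
    (∀ a, f a = ∑ b, p b * f b) ↔ ∃ c, ∀ a, f a = c := by
  refine ⟨fun h => ⟨_, h⟩, fun ⟨c, hc⟩ a => ?_⟩
  simp [hc, ← sum_mul, hsum]

lemma exists_forall_log_eq_iff {p : A → ℝ} (hpos : ∀ a, 0 < p a) (hsum : ∑ a, p a = 1) :
    (∃ c, ∀ a, log (p a) = c) ↔ ∀ a, p a = 1 / Fintype.card A := by
  refine ⟨fun ⟨c, hc⟩ => ?_, fun h => ⟨_, fun a => by rw [h a]⟩⟩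
  have hp (a : A) : p a = exp c := by rw [← hc a, Real.exp_log (hpos a)]
  have hcard : (Fintype.card A : ℝ) * exp c = 1 := by simpa [hp] using hsum
  exact fun a => (hp a).trans (eq_one_div_of_mul_eq_one_right hcard)

end Tilt

theorem stmt12_general {A : Type*} [Fintype A] (π : A → ℝ)
    (hpos : ∀ a, 0 < π a) (hsum : ∑ a, π a = 1)
    (πη : ℝ → A → ℝ)
    (hπη : ∀ η a, πη η a = π a ^ (1 + η) / ∑ a', π a' ^ (1 + η)) :
    HasDerivAt (fun η => -∑ a, πη η a * Real.log (πη η a))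
      (-((∑ a, π a * (Real.log (π a))^2) - (∑ a, π a * Real.log (π a))^2)) 0 ∧
    0 ≤ (∑ a, π a * (Real.log (π a))^2) - (∑ a, π a * Real.log (π a))^2 ∧
    (((∑ a, π a * (Real.log (π a))^2) - (∑ a, π a * Real.log (π a))^2 = 0) ↔
      ∀ a, π a = 1 / (Fintype.card A : ℝ)) := by
  have hπη_tilt : πη = tilt π (fun a => log (π a)) := by
    funext η a
    simp only [hπη, tilt, rpow_one_add_eq_mul_exp (hpos _)]
  have hentropy : (fun η => -∑ a, πη η a * log (πη η a)) =
      fun η => ∑ a, negMulLog (tilt π (fun a => log (π a)) η a) := by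
    simp [hπη_tilt, Real.negMulLog, sum_neg_distrib]
  refine ⟨?_, sum_mul_sq_sub_sq_nonneg (fun a => (hpos a).le) hsum _, ?_⟩
  · rw [hentropy]
    simpa [sq, mul_assoc] using hasDerivAt_entropy_tilt_zero hpos hsum fun a => log (π a)
  · rw [sum_mul_sq_sub_sq_eq_zero_iff hpos hsum, forall_eq_sum_mul_iff hsum,
      exists_forall_log_eq_iff hpos hsum]

/-- With the trajectory-entropy reward `r = log π`, the first-order change of
entropy along the tilt `π_η(a) ∝ π(a)^{1+η}` is `−Var_{a∼π}(log π(a)) ≤ 0`,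
which vanishes iff `π` is uniform. -/
theorem stmt12 {A : Type*} [Fintype A] [Nonempty A] (π : A → ℝ)
    (hpos : ∀ a, 0 < π a) (hsum : ∑ a, π a = 1)
    (πη : ℝ → A → ℝ)
    (hπη : ∀ η a, πη η a = π a ^ (1 + η) / ∑ a', π a' ^ (1 + η)) :
    HasDerivAt (fun η => -∑ a, πη η a * Real.log (πη η a))
      (-((∑ a, π a * (Real.log (π a))^2) - (∑ a, π a * Real.log (π a))^2)) 0 ∧
    0 ≤ (∑ a, π a * (Real.log (π a))^2) - (∑ a, π a * Real.log (π a))^2 ∧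
    (((∑ a, π a * (Real.log (π a))^2) - (∑ a, π a * Real.log (π a))^2 = 0) ↔
      ∀ a, π a = 1 / (Fintype.card A : ℝ)) :=
  stmt12_general π hpos hsum πη hπη
end
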